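/- Let (a_j)_{j≥1} and (b_j)_{j≥1} be sequences of nonnegative random variables such that for each j, the random vector (a_1, …, a_{j-1}, b_j) has the property that b_j, a_1, …, a_{j-1} are mutually independent, all a_j are identically distributed, and all b_j are identically distributed. Suppose that for some p ∈ (0, 1], E[a_1^p] < 1 and E[b_1^p] < ∞. Then E[(∑_{j=1}^∞ b_j · ∏_{k=1}^{j-1} a_k)^p] ≤ E[b_1^p] / (1 − E[a_1^p]); in particular the series ∑_{j=1}^∞ b_j ∏_{k=1}^{j-1} a_k converges almost surely. -/

import Mathlib

/-!
For `p ≤ 1` the map `x ↦ x ^ p` is subadditive on `[0, ∞]`, so the `p`-th power of the perpetuity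
is at most the sum of the `p`-th powers of its terms. By independence the `j`-th of these has
expectation `E[a^p]^j E[b^p]`, and summing the geometric series gives the bound. Being finite, it
forces the perpetuity to be finite almost surely, which is the convergence of the real series.
-/

open MeasureTheory ProbabilityTheory Finset
open scoped ENNReal

theorem ENNReal.rpow_tsum_le_tsum_rpow {ι : Type*} {p : ℝ} (hp0 : 0 < p) (hp1 : p ≤ 1)
    (f : ι → ℝ≥0∞) : (∑' i, f i) ^ p ≤ ∑' i, f i ^ p := by
  rw [← ENNReal.le_rpow_inv_iff hp0, ENNReal.tsum_eq_iSup_sum]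
  refine iSup_le fun s => (ENNReal.le_rpow_inv_iff hp0).2 ?_
  calc (∑ i ∈ s, f i) ^ p ≤ ∑ i ∈ s, f i ^ p :=
        Finset.le_sum_of_subadditive (· ^ p) (ENNReal.zero_rpow_of_pos hp0).le
          (fun x y => ENNReal.rpow_add_le_add_rpow x y hp0.le hp1) s f
    _ ≤ ∑' i, f i ^ p := ENNReal.sum_le_tsum s

theorem summable_of_tsum_ofReal_ne_top {ι : Type*} {f : ι → ℝ} (hf : ∀ i, 0 ≤ f i)
    (h : ∑' i, ENNReal.ofReal (f i) ≠ ∞) : Summable f :=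
  (ENNReal.summable_toReal h).congr fun i => ENNReal.toReal_ofReal (hf i)

theorem lintegral_rpow_tsum_le_tsum_lintegral_rpow {Ω ι : Type*} [MeasurableSpace Ω] [Countable ι]
    {μ : Measure Ω} {p : ℝ} (hp0 : 0 < p) (hp1 : p ≤ 1) {X : ι → Ω → ℝ≥0∞}
    (hX : ∀ i, AEMeasurable (X i) μ) :
    ∫⁻ ω, (∑' i, X i ω) ^ p ∂μ ≤ ∑' i, ∫⁻ ω, X i ω ^ p ∂μ :=
  calc ∫⁻ ω, (∑' i, X i ω) ^ p ∂μ ≤ ∫⁻ ω, ∑' i, X i ω ^ p ∂μ :=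
        lintegral_mono fun _ => ENNReal.rpow_tsum_le_tsum_rpow hp0 hp1 _
    _ = ∑' i, ∫⁻ ω, X i ω ^ p ∂μ := lintegral_tsum fun i => (hX i).pow_const p

theorem lintegral_comp_mul_prod_range_of_iIndepFun {Ω : Type*} [MeasurableSpace Ω]
    {μ : Measure Ω} {a b : ℕ → Ω → ℝ} (g : ℝ → ℝ≥0∞) (hg : Measurable g)
    (ha_meas : ∀ k, Measurable (a k)) (hb_meas : ∀ j, Measurable (b j))
    (ha_ident : ∀ k, IdentDistrib (a k) (a 0) μ μ)
    (hb_ident : ∀ j, IdentDistrib (b j) (b 0) μ μ) {j : ℕ}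
    (hindep : iIndepFun (m := fun _ => (inferInstance : MeasurableSpace ℝ))
      (Fin.snoc (fun i : Fin j => a (i : ℕ)) (b j)) μ) :
    ∫⁻ ω, g (b j ω) * ∏ k ∈ range j, g (a k ω) ∂μ =
      (∫⁻ ω, g (a 0 ω) ∂μ) ^ j * ∫⁻ ω, g (b 0 ω) ∂μ := by
  set F : Fin (j + 1) → Ω → ℝ := Fin.snoc (fun i : Fin j => a (i : ℕ)) (b j)
  have hF_meas : ∀ i, Measurable (F i) := fun i =>
    Fin.lastCases (by simpa [F] using hb_meas j) (fun i => by simpa [F] using ha_meas i) i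
  have hprod : ∀ ω, g (b j ω) * ∏ k ∈ range j, g (a k ω) = ∏ i, g (F i ω) := fun ω => by
    simp [F, Fin.prod_univ_castSucc, Fin.prod_univ_eq_prod_range (fun k => g (a k ω)), mul_comm]
  calc ∫⁻ ω, g (b j ω) * ∏ k ∈ range j, g (a k ω) ∂μ
      = ∏ i, ∫⁻ ω, g (F i ω) ∂μ := by
        simp_rw [hprod]
        exact lintegral_prod_eq_prod_lintegral_of_indepFun _ (fun i => g ∘ F i)
          (hindep.comp (fun _ => g) fun _ => hg) fun i => hg.comp (hF_meas i)
    _ = (∫⁻ ω, g (a 0 ω) ∂μ) ^ j * ∫⁻ ω, g (b 0 ω) ∂μ := by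
        have hA : ∀ k, ∫⁻ ω, g (a k ω) ∂μ = ∫⁻ ω, g (a 0 ω) ∂μ := fun k =>
          ((ha_ident k).comp hg).lintegral_eq
        have hB : ∫⁻ ω, g (b j ω) ∂μ = ∫⁻ ω, g (b 0 ω) ∂μ := ((hb_ident j).comp hg).lintegral_eq
        simp [F, Fin.prod_univ_castSucc, hA, hB]

/-- Grey-type moment bound: if the `a_j` are i.i.d., the `b_j` are i.i.d., each `b_j`
is jointly independent of `a_0, …, a_{j-1}`, `E[a^p] < 1` and `E[b^p] < ∞` for some
`p ∈ (0,1]`, then `E[(∑_j b_j ∏_{k<j} a_k)^p] ≤ E[b^p]/(1 - E[a^p])` and the series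
converges almost surely. -/
theorem perpetuity_moment_bound {Ω : Type*} [MeasurableSpace Ω]
    (μ : Measure Ω) [IsProbabilityMeasure μ]
    (a b : ℕ → Ω → ℝ)
    (ha_meas : ∀ j, Measurable (a j)) (hb_meas : ∀ j, Measurable (b j))
    (ha_nonneg : ∀ j ω, 0 ≤ a j ω) (hb_nonneg : ∀ j ω, 0 ≤ b j ω)
    (ha_ident : ∀ j, IdentDistrib (a j) (a 0) μ μ)
    (hb_ident : ∀ j, IdentDistrib (b j) (b 0) μ μ)
    (hindep : ∀ j : ℕ, iIndepFun (m := fun _ => (inferInstance : MeasurableSpace ℝ))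
      (Fin.snoc (fun i : Fin j => a (i : ℕ)) (b j)) μ)
    (p : ℝ) (hp0 : 0 < p) (hp1 : p ≤ 1)
    (ha_mom : (∫⁻ ω, ENNReal.ofReal (a 0 ω) ^ p ∂μ) < 1)
    (hb_mom : (∫⁻ ω, ENNReal.ofReal (b 0 ω) ^ p ∂μ) < ⊤) :
    (∫⁻ ω, (∑' j : ℕ, ENNReal.ofReal (b j ω) *
          ∏ k ∈ Finset.range j, ENNReal.ofReal (a k ω)) ^ p ∂μ) ≤
      (∫⁻ ω, ENNReal.ofReal (b 0 ω) ^ p ∂μ) /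
        (1 - ∫⁻ ω, ENNReal.ofReal (a 0 ω) ^ p ∂μ) ∧
    (∀ᵐ ω ∂μ, Summable fun j : ℕ => b j ω * ∏ k ∈ Finset.range j, a k ω) := by
  set A := ∫⁻ ω, ENNReal.ofReal (a 0 ω) ^ p ∂μ
  set B := ∫⁻ ω, ENNReal.ofReal (b 0 ω) ^ p ∂μ
  set X : ℕ → Ω → ℝ≥0∞ := fun j ω => ENNReal.ofReal (b j ω) * ∏ k ∈ range j, ENNReal.ofReal (a k ω)
  have hX_meas : ∀ j, Measurable (X j) := fun j =>
    (hb_meas j).ennreal_ofReal.mul (Finset.measurable_prod _ fun k _ => (ha_meas k).ennreal_ofReal)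
  have hX_moment : ∀ j, ∫⁻ ω, X j ω ^ p ∂μ = A ^ j * B := fun j => by
    rw [← lintegral_comp_mul_prod_range_of_iIndepFun (fun x => ENNReal.ofReal x ^ p)
      (ENNReal.measurable_ofReal.pow_const p) ha_meas hb_meas ha_ident hb_ident (hindep j)]
    simp only [X, ENNReal.mul_rpow_of_nonneg _ _ hp0.le, ENNReal.prod_rpow_of_nonneg hp0.le]
  have hbound : ∫⁻ ω, (∑' j, X j ω) ^ p ∂μ ≤ B / (1 - A) :=
    calc ∫⁻ ω, (∑' j, X j ω) ^ p ∂μ ≤ ∑' j, A ^ j * B := by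
          simpa only [hX_moment] using
            lintegral_rpow_tsum_le_tsum_lintegral_rpow (μ := μ) hp0 hp1 fun j => (hX_meas j).aemeasurable
      _ = B / (1 - A) := by
          rw [ENNReal.tsum_mul_right, ENNReal.tsum_geometric, div_eq_mul_inv, mul_comm]
  refine ⟨hbound, ?_⟩
  have hfinite : ∫⁻ ω, (∑' j, X j ω) ^ p ∂μ ≠ ∞ :=
    (hbound.trans_lt (ENNReal.div_lt_top hb_mom.ne (tsub_pos_of_lt ha_mom).ne')).ne
  filter_upwards [ae_lt_top ((Measurable.tsum hX_meas).pow_const p) hfinite] with ω hω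
  have hterm_nonneg : ∀ j, 0 ≤ b j ω * ∏ k ∈ range j, a k ω := fun j =>
    mul_nonneg (hb_nonneg j ω) (prod_nonneg fun k _ => ha_nonneg k ω)
  refine summable_of_tsum_ofReal_ne_top hterm_nonneg ?_
  simpa only [ENNReal.ofReal_mul (hb_nonneg _ ω),
    ENNReal.ofReal_prod_of_nonneg fun k _ => ha_nonneg k ω] using
    ((ENNReal.rpow_lt_top_iff_of_pos hp0).1 hω).ne
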